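/- Structural congruence is stable under graph substitution: if T ≡ T' and fn(G) = {X⃗}, then T[G / x[X⃗]] ≡ T'[G / x[X⃗]]. -/
import Mathlib


/-- λ_GT graph templates: `0`, atoms `p(X⃗)`, fusions `X ⋈ Y`,
molecules `(T,T)`, hyperlink creation `νX.T`, graph variables `x[X⃗]`.
Links are natural numbers; atom names are abstract labels. -/
inductive GT where
  | zero : GT
  | atom : String → List ℕ → GT
  | fuse : ℕ → ℕ → GT
  | mol : GT → GT → GT
  | nu : ℕ → GT → GT
  | gvar : String → List ℕ → GT

namespace GT

/-- Free links of a template. -/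
def fn : GT → Finset ℕ
  | zero => ∅
  | atom _ ls => ls.toFinset
  | fuse x y => {x, y}
  | mol t₁ t₂ => fn t₁ ∪ fn t₂
  | nu x t => (fn t).erase x
  | gvar _ ls => ls.toFinset

/-- A link fresh with respect to a finite set. -/
def fresh (s : Finset ℕ) : ℕ := s.sup id + 1

/-- Capture-avoiding simultaneous renaming of free links. -/
def ren (σ : ℕ → ℕ) : GT → GT
  | zero => zero
  | atom p ls => atom p (ls.map σ)
  | fuse x y => fuse (σ x) (σ y)
  | mol t₁ t₂ => mol (ren σ t₁) (ren σ t₂)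
  | gvar x ls => gvar x (ls.map σ)
  | nu x t =>
      let w := fresh (((fn t).erase x).image σ)
      nu w (ren (Function.update σ x w) t)

/-- Capture-avoiding link substitution `T⟨y/x⟩`, replacing free occurrences
of `x` by `y`. -/
def lsubst (t : GT) (y x : ℕ) : GT := ren (Function.update id x y) t

/-- Structural congruence on λ_GT graph templates: the least equivalence
relation closed under rules (E1)–(E10). -/
inductive Cong : GT → GT → Prop where
  | refl (t : GT) : Cong t t
  | symm {t₁ t₂ : GT} : Cong t₁ t₂ → Cong t₂ t₁
  | trans {t₁ t₂ t₃ : GT} : Cong t₁ t₂ → Cong t₂ t₃ → Cong t₁ t₃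
  | e1 (t : GT) : Cong (mol zero t) t
  | e2 (t₁ t₂ : GT) : Cong (mol t₁ t₂) (mol t₂ t₁)
  | e3 (t₁ t₂ t₃ : GT) : Cong (mol t₁ (mol t₂ t₃)) (mol (mol t₁ t₂) t₃)
  | e4 {t₁ t₂ : GT} (t₃ : GT) : Cong t₁ t₂ → Cong (mol t₁ t₃) (mol t₂ t₃)
  | e5 {t₁ t₂ : GT} (x : ℕ) : Cong t₁ t₂ → Cong (nu x t₁) (nu x t₂)
  | e6 {x y : ℕ} {t : GT} : x ∈ fn t ∨ y ∈ fn t →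
      Cong (nu x (mol (fuse x y) t)) (nu x (lsubst t y x))
  | e7 (x y : ℕ) : Cong (nu x (nu y (fuse x y))) zero
  | e8 (x : ℕ) : Cong (nu x zero) zero
  | e9 (x y : ℕ) (t : GT) : Cong (nu x (nu y t)) (nu y (nu x t))
  | e10 {x : ℕ} {t₂ : GT} (t₁ : GT) : x ∉ fn t₂ →
      Cong (nu x (mol t₁ t₂)) (mol (nu x t₁) t₂)

/-- The finite renaming `⟨ls/Xs⟩` sending each `Xsᵢ` to `lsᵢ`. -/
def mkRen (Xs ls : List ℕ) : ℕ → ℕ := fun w =>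
  match (Xs.zip ls).find? (fun p => p.1 = w) with
  | some p => p.2
  | none => w

/-- Graph substitution `T[G / x[Xs]]`: every occurrence of the graph variable
`x` (with the same arity) is replaced by `G` with its free links `Xs` renamed
to the links of the occurrence. -/
def gsubst (x : String) (Xs : List ℕ) (G : GT) : GT → GT
  | zero => zero
  | atom p ls => atom p ls
  | fuse a b => fuse a b
  | mol t₁ t₂ => mol (gsubst x Xs G t₁) (gsubst x Xs G t₂)
  | nu z t => nu z (gsubst x Xs G t)
  | gvar y ls =>
      if y = x ∧ ls.length = Xs.length then ren (mkRen Xs ls) G else gvar y ls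

end GT


namespace GT

lemma fresh_not_mem (s : Finset ℕ) : fresh s ∉ s := by
  intro h
  have := Finset.le_sup (f := id) h
  simp only [id] at this
  simp only [fresh] at *
  omega

lemma erase_image_update (τ : ℕ → ℕ) (z w : ℕ) (s : Finset ℕ)
    (hw : w ∉ (s.erase z).image τ) :
    (s.image (Function.update τ z w)).erase w = (s.erase z).image τ := by
  ext a
  simp only [Finset.mem_erase, Finset.mem_image]
  constructor
  · rintro ⟨haw, b, hb, rfl⟩
    rcases eq_or_ne b z with rfl | hbz
    · rw [Function.update_self] at haw; exact absurd rfl haw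
    · exact ⟨b, ⟨hbz, hb⟩, by rw [Function.update_of_ne hbz]⟩
  · rintro ⟨b, ⟨hbz, hb⟩, rfl⟩
    refine ⟨?_, b, hb, by rw [Function.update_of_ne hbz]⟩
    intro hc
    exact hw (Finset.mem_image.mpr ⟨b, Finset.mem_erase.mpr ⟨hbz, hb⟩, hc⟩)

lemma fn_ren (σ : ℕ → ℕ) (t : GT) : (ren σ t).fn = t.fn.image σ := by
  induction t generalizing σ with
  | zero => simp [ren, fn]
  | atom p ls => simp only [ren, fn]; ext a; simp
  | fuse a b => simp [ren, fn]
  | mol t₁ t₂ ih₁ ih₂ => simp [ren, fn, ih₁, ih₂, Finset.image_union]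
  | gvar y ls => simp only [ren, fn]; ext a; simp
  | nu z t ih =>
      show ((ren (Function.update σ z _) t).fn).erase _ = _
      rw [ih]
      exact erase_image_update σ z _ t.fn (fresh_not_mem _)

lemma ren_congr {σ σ' : ℕ → ℕ} (t : GT) (h : ∀ z ∈ t.fn, σ z = σ' z) :
    ren σ t = ren σ' t := by
  induction t generalizing σ σ' with
  | zero => simp [ren]
  | atom p ls =>
      simp only [ren, atom.injEq, true_and]
      exact List.map_congr_left (fun a ha => h a (by simp [fn, ha]))
  | fuse a b => simp [ren, h a (by simp [fn]), h b (by simp [fn])]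
  | mol t₁ t₂ ih₁ ih₂ =>
      simp only [ren, mol.injEq]
      exact ⟨ih₁ (fun z hz => h z (by simp [fn, hz])),
             ih₂ (fun z hz => h z (by simp [fn, hz]))⟩
  | gvar y ls =>
      simp only [ren, gvar.injEq, true_and]
      exact List.map_congr_left (fun a ha => h a (by simp [fn, ha]))
  | nu z t ih =>
      have himg : (t.fn.erase z).image σ = (t.fn.erase z).image σ' := by
        apply Finset.image_congr
        intro a ha
        simp only [Finset.coe_erase, Set.mem_diff, Finset.mem_coe] at ha
        exact h a (show a ∈ (t.fn).erase z from
          Finset.mem_erase.mpr ⟨by simpa using ha.2, ha.1⟩)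
      simp only [ren, himg]
      congr 1
      apply ih
      intro a ha
      rcases eq_or_ne a z with rfl | haz
      · rw [Function.update_self, Function.update_self]
      · rw [Function.update_of_ne haz, Function.update_of_ne haz]
        exact h a (show a ∈ (t.fn).erase z from Finset.mem_erase.mpr ⟨haz, ha⟩)

lemma ren_ren (σ τ : ℕ → ℕ) (t : GT) : ren σ (ren τ t) = ren (σ ∘ τ) t := by
  induction t generalizing σ τ with
  | zero => simp [ren]
  | atom p ls => simp [ren]
  | fuse a b => simp [ren]
  | mol t₁ t₂ ih₁ ih₂ => simp [ren, ih₁, ih₂]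
  | gvar y ls => simp [ren]
  | nu z t ih =>
      simp only [ren]
      set w := fresh ((t.fn.erase z).image τ) with hw
      have hwf : w ∉ (t.fn.erase z).image τ := fresh_not_mem _
      have hfn1 : (ren (Function.update τ z w) t).fn.erase w
          = (t.fn.erase z).image τ := by
        rw [fn_ren]
        exact erase_image_update τ z w t.fn hwf
      have himg : ((ren (Function.update τ z w) t).fn.erase w).image σ
          = (t.fn.erase z).image (σ ∘ τ) := by
        rw [hfn1, Finset.image_image]
      rw [himg]
      congr 1
      rw [ih]
      apply ren_congr
      intro a ha
      rcases eq_or_ne a z with rfl | haz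
      · simp only [Function.comp_apply]
        rw [Function.update_self, Function.update_self, Function.update_self]
      · have hτa : τ a ≠ w := fun hc =>
          hwf (Finset.mem_image.mpr ⟨a, Finset.mem_erase.mpr ⟨haz, ha⟩, hc⟩)
        simp only [Function.comp_apply]
        rw [Function.update_of_ne haz, Function.update_of_ne hτa,
          Function.update_of_ne haz]
        rfl

lemma mkRen_cons (X l : ℕ) (Xs ls : List ℕ) (a : ℕ) :
    mkRen (X :: Xs) (l :: ls) a = if X = a then l else mkRen Xs ls a := by
  simp only [mkRen, List.zip_cons_cons, List.find?_cons]
  by_cases h : X = a <;> simp [h]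

lemma mkRen_map (σ : ℕ → ℕ) : ∀ (Xs ls : List ℕ) (a : ℕ), a ∈ Xs →
    ls.length = Xs.length → mkRen Xs (ls.map σ) a = σ (mkRen Xs ls a) := by
  intro Xs
  induction Xs with
  | nil => intro ls a ha; simp at ha
  | cons X Xs ih =>
      intro ls a ha hlen
      cases ls with
      | nil => simp at hlen
      | cons l ls =>
          simp only [List.map_cons, mkRen_cons]
          rcases eq_or_ne X a with rfl | hXa
          · simp
          · simp only [hXa, if_false]
            have : a ∈ Xs := by
              rcases List.mem_cons.mp ha with rfl | h
              · exact absurd rfl hXa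
              · exact h
            exact ih ls a this (by simpa using hlen)

lemma image_mkRen : ∀ (Xs ls : List ℕ), Xs.Nodup → ls.length = Xs.length →
    Xs.toFinset.image (mkRen Xs ls) = ls.toFinset := by
  intro Xs
  induction Xs with
  | nil =>
      intro ls _ hlen
      cases ls with
      | nil => simp
      | cons l ls => simp at hlen
  | cons X Xs ih =>
      intro ls hnd hlen
      cases ls with
      | nil => simp at hlen
      | cons l ls =>
          have hX : X ∉ Xs := (List.nodup_cons.mp hnd).1
          have hnd' : Xs.Nodup := (List.nodup_cons.mp hnd).2
          have hlen' : ls.length = Xs.length := by simpa using hlen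
          simp only [List.toFinset_cons, Finset.image_insert, mkRen_cons,
            if_pos rfl]
          congr 1
          rw [← ih ls hnd' hlen']
          apply Finset.image_congr
          intro a ha
          simp only [Finset.mem_coe, List.mem_toFinset] at ha
          have : X ≠ a := fun h => hX (h ▸ ha)
          simp [mkRen_cons, this]

lemma fn_gsubst (x : String) (Xs : List ℕ) (G : GT)
    (hnd : Xs.Nodup) (hfn : G.fn = Xs.toFinset) (t : GT) :
    (gsubst x Xs G t).fn = t.fn := by
  induction t with
  | zero => simp [gsubst]
  | atom p ls => simp [gsubst]
  | fuse a b => simp [gsubst]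
  | mol t₁ t₂ ih₁ ih₂ => simp [gsubst, fn, ih₁, ih₂]
  | nu z t ih => simp [gsubst, fn, ih]
  | gvar y ls =>
      simp only [gsubst]
      split
      · next hc =>
          rw [fn_ren, hfn, image_mkRen Xs ls hnd hc.2]
          rfl
      · rfl

lemma gsubst_ren (x : String) (Xs : List ℕ) (G : GT)
    (hnd : Xs.Nodup) (hfn : G.fn = Xs.toFinset) (σ : ℕ → ℕ) (t : GT) :
    gsubst x Xs G (ren σ t) = ren σ (gsubst x Xs G t) := by
  induction t generalizing σ with
  | zero => simp [gsubst, ren]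
  | atom p ls => simp [gsubst, ren]
  | fuse a b => simp [gsubst, ren]
  | mol t₁ t₂ ih₁ ih₂ => simp [gsubst, ren, ih₁, ih₂]
  | nu z t ih =>
      simp only [ren, gsubst, fn_gsubst x Xs G hnd hfn]
      rw [ih]
  | gvar y ls =>
      simp only [ren, gsubst, List.length_map]
      split
      · next hc =>
          rw [ren_ren]
          apply ren_congr
          intro a ha
          rw [hfn] at ha
          exact mkRen_map σ Xs ls a (by simpa using ha) hc.2
      · simp [ren]

lemma gsubst_lsubst (x : String) (Xs : List ℕ) (G : GT)
    (hnd : Xs.Nodup) (hfn : G.fn = Xs.toFinset) (t : GT) (y z : ℕ) :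
    gsubst x Xs G (lsubst t y z) = lsubst (gsubst x Xs G t) y z :=
  gsubst_ren x Xs G hnd hfn _ t

end GT

/-- Structural congruence is stable under graph substitution:
if `T ≡ T'` and `fn(G) = {X⃗}` then `T[G / x[X⃗]] ≡ T'[G / x[X⃗]]`. -/
theorem cong_gsubst {T T' : GT} (h : GT.Cong T T')
    (x : String) (Xs : List ℕ) (G : GT)
    (hnd : Xs.Nodup) (hfn : G.fn = Xs.toFinset) :
    GT.Cong (GT.gsubst x Xs G T) (GT.gsubst x Xs G T') := by
  induction h with
  | refl t => exact GT.Cong.refl _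
  | symm _ ih => exact ih.symm
  | trans _ _ ih₁ ih₂ => exact ih₁.trans ih₂
  | e1 t => exact GT.Cong.e1 _
  | e2 t₁ t₂ => exact GT.Cong.e2 _ _
  | e3 t₁ t₂ t₃ => exact GT.Cong.e3 _ _ _
  | e4 t₃ _ ih => exact GT.Cong.e4 _ ih
  | e5 z _ ih => exact GT.Cong.e5 _ ih
  | @e6 z y t hc =>
      simp only [GT.gsubst, GT.gsubst_lsubst x Xs G hnd hfn]
      exact GT.Cong.e6 (by rwa [GT.fn_gsubst x Xs G hnd hfn])
  | e7 z y => exact GT.Cong.e7 _ _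
  | e8 z => exact GT.Cong.e8 _
  | e9 z y t => exact GT.Cong.e9 _ _ _
  | @e10 z t₂ t₁ hz =>
      exact GT.Cong.e10 _ (by rwa [GT.fn_gsubst x Xs G hnd hfn])
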